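/- Let a, b, c be positive integers and let x be an integer with 1 ≤ x ≤ min(a,b). Then Σ_{i=a+1−x}^{a} E(i, x−a+i) = b·c·x/(a+b); equivalently, (a+b) · Σ_T Σ_{i=a+1−x}^{a} T(i, x−a+i) = b·c·x · N(a,b,c), where the outer sum is over all plane partitions T in the a×b×c box. -/

import Mathlib

open Finset

/-- Plane partitions in an `a × b × c` box: assignments of entries in `{0, …, c}` to the
cells of an `a × b` rectangle with weakly decreasing rows and columns. -/
def PlanePartitions (a b c : ℕ) : Finset (Fin a → Fin b → Fin (c + 1)) :=
  univ.filter (fun T =>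
    (∀ i : Fin a, ∀ j j' : Fin b, j ≤ j' → T i j' ≤ T i j) ∧
    (∀ i i' : Fin a, ∀ j : Fin b, i ≤ i' → T i' j ≤ T i j))

/-- The entry `T(i, j)` of a plane partition at the 1-based cell `(i, j)`. -/
def entry (a b c : ℕ) (T : Fin a → Fin b → Fin (c + 1)) (i j : ℕ) : ℕ :=
  if h : 1 ≤ i ∧ i ≤ a ∧ 1 ≤ j ∧ j ≤ b then
    (T ⟨i - 1, by omega⟩ ⟨j - 1, by omega⟩ : ℕ)
  else 0

/-- `E a b c i j` is the expected value of the entry at the 1-based cell `(i, j)` of a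
uniformly random plane partition in an `a × b × c` box. -/
def E (a b c i j : ℕ) : ℚ :=
  (∑ T ∈ PlanePartitions a b c, (entry a b c T i j : ℚ))
    / ((PlanePartitions a b c).card : ℚ)

/-!
Read `T`, padded by `c` above and to the left and by `0` below and to the right, as a stack of
cubes, and count on each of the `a + b` diagonals of the box the cube faces normal to the row axis.
Column by column these counts telescope: all `a + b` of them add up to `b * c`, and the last `x` of
them add up to the diagonal sum `∑ T(i, x - a + i)`. Toggling one diagonal, i.e. reflecting each of
its entries inside the interval allowed by its neighbours, is an involution of the plane partitions
in the box which carries the count on diagonal `t` to the count on diagonal `t + 1`. Summed over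
all plane partitions the `a + b` counts are therefore equal, each being
`N(a, b, c) * b * c / (a + b)`.
-/

def RowColAntitone (g : ℕ → ℕ → ℤ) : Prop :=
  ∀ r j, g (r + 1) j ≤ g r j ∧ g r (j + 1) ≤ g r j

namespace PlanePartitions

section DiagToggle

/-- Reflects each entry of the diagonal `r = t + 1 + j`, `j ≥ 1`, inside the interval allowed by its
four neighbours, none of which lies on that diagonal. -/
def diagToggle (t : ℕ) (g : ℕ → ℕ → ℤ) (r j : ℕ) : ℤ :=
  if r = t + 1 + j ∧ 1 ≤ j then
    min (g (r - 1) j) (g r (j - 1)) + max (g (r + 1) j) (g r (j + 1)) - g r j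
  else g r j

/-- `g r j - g (r + 1) j` counts the faces, normal to the row axis, of the stack of cubes `g`
between rows `r` and `r + 1` of column `j`; `faces b t g` counts them along the `t`-th diagonal of
`b` columns. -/
def faces (b t : ℕ) (g : ℕ → ℕ → ℤ) : ℤ :=
  ∑ j ∈ range b, (g (t + j + 1) (j + 1) - g (t + j + 2) (j + 1))

variable {g : ℕ → ℕ → ℤ} {b t : ℕ}

lemma diagToggle_of_diag {r j : ℕ} (hr : r = t + 1 + j) (hj : 1 ≤ j) :
    diagToggle t g r j =
      min (g (r - 1) j) (g r (j - 1)) + max (g (r + 1) j) (g r (j + 1)) - g r j :=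
  if_pos ⟨hr, hj⟩

lemma diagToggle_of_not_diag {r j : ℕ} (h : ¬(r = t + 1 + j ∧ 1 ≤ j)) :
    diagToggle t g r j = g r j :=
  if_neg h

lemma diagToggle_diagToggle : diagToggle t (diagToggle t g) = g := by
  funext r j
  by_cases h : r = t + 1 + j ∧ 1 ≤ j
  · rw [diagToggle_of_diag h.1 h.2, diagToggle_of_diag h.1 h.2,
      diagToggle_of_not_diag (by omega), diagToggle_of_not_diag (by omega),
      diagToggle_of_not_diag (by omega), diagToggle_of_not_diag (by omega)]
    ring
  · rw [diagToggle_of_not_diag h, diagToggle_of_not_diag h]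

lemma diagToggle_mem_Icc (hg : RowColAntitone g) (t r j : ℕ) :
    max (g (r + 1) j) (g r (j + 1)) ≤ diagToggle t g r j ∧
      diagToggle t g r j ≤ min (g (r - 1) j) (g r (j - 1)) := by
  have hup : g r j ≤ g (r - 1) j := by
    rcases r with _ | r
    · rfl
    · exact (hg r j).1
  have hleft : g r j ≤ g r (j - 1) := by
    rcases j with _ | j
    · rfl
    · exact (hg r j).2
  have hdown := hg r j
  by_cases h : r = t + 1 + j ∧ 1 ≤ j
  · rw [diagToggle_of_diag h.1 h.2]
    omega
  · rw [diagToggle_of_not_diag h]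
    omega

lemma rowColAntitone_diagToggle (hg : RowColAntitone g) (t : ℕ) :
    RowColAntitone (diagToggle t g) := by
  intro r j
  have hcur := diagToggle_mem_Icc hg t r j
  have hdown := diagToggle_mem_Icc hg t (r + 1) j
  have hright := diagToggle_mem_Icc hg t r (j + 1)
  simp only [Nat.add_sub_cancel] at hdown hright
  constructor
  · by_cases h : r = t + 1 + j ∧ 1 ≤ j
    · rw [diagToggle_of_not_diag (g := g) (r := r + 1) (by omega)]
      exact (le_max_left _ _).trans hcur.1
    · rw [diagToggle_of_not_diag h]
      exact hdown.2.trans (min_le_left _ _)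
  · by_cases h : r = t + 1 + j ∧ 1 ≤ j
    · rw [diagToggle_of_not_diag (g := g) (j := j + 1) (by omega)]
      exact (le_max_right _ _).trans hcur.1
    · rw [diagToggle_of_not_diag h]
      exact hright.2.trans (min_le_right _ _)

lemma diagToggle_diag (j : ℕ) :
    diagToggle t g (t + 1 + (j + 1)) (j + 1) =
      min (g (t + j + 1) (j + 1)) (g (t + j + 2) j)
        + max (g (t + j + 3) (j + 1)) (g (t + j + 2) (j + 2)) - g (t + j + 2) (j + 1) := by
  rw [diagToggle_of_diag rfl (by omega), show t + 1 + (j + 1) = t + j + 2 by ring,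
    show t + j + 2 - 1 = t + j + 1 by omega, Nat.add_sub_cancel]

lemma faces_diagToggle (h₀ : g (t + 1) 1 ≤ g (t + 2) 0)
    (hb : g (t + b + 1) (b + 1) ≤ g (t + b + 2) b) :
    faces b (t + 1) (diagToggle t g) = faces b t g := by
  set M : ℕ → ℤ := fun n ↦ max (g (t + n + 1) (n + 1)) (g (t + n + 2) n) - g (t + n + 2) n
  have hterm : ∀ j, diagToggle t g (t + 1 + j + 1) (j + 1) - diagToggle t g (t + 1 + j + 2) (j + 1)
      = (g (t + j + 1) (j + 1) - g (t + j + 2) (j + 1)) + (M (j + 1) - M j) := by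
    intro j
    rw [add_assoc (t + 1) j 1, diagToggle_diag, diagToggle_of_not_diag (by omega)]
    simp only [M, show t + 1 + j + 2 = t + (j + 1) + 2 by ring,
      show t + (j + 1) + 1 = t + j + 2 by ring, show t + (j + 1) + 2 = t + j + 3 by ring,
      show j + 1 + 1 = j + 2 by ring]
    have := min_add_max (g (t + j + 1) (j + 1)) (g (t + j + 2) j)
    omega
  have hM₀ : M 0 = 0 := by simp [M, max_eq_right h₀]
  have hMb : M b = 0 := by simp [M, max_eq_right hb]
  simp only [faces, hterm, sum_add_distrib, sum_range_sub, hM₀, hMb, sub_zero, add_zero]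

lemma sum_faces_Ico {m n : ℕ} (hmn : m ≤ n) :
    ∑ t ∈ Ico m n, faces b t g
      = ∑ j ∈ range b, (g (m + j + 1) (j + 1) - g (n + j + 1) (j + 1)) := by
  simp only [faces]
  rw [sum_comm]
  refine sum_congr rfl fun j _ ↦ ?_
  have := sum_Ico_sub (fun t ↦ g (t + j + 1) (j + 1)) hmn
  simp only [show ∀ t, t + 1 + j + 1 = t + j + 2 by intro t; ring] at this
  rw [← neg_sub, ← this, ← sum_neg_distrib]
  simp only [neg_sub]

end DiagToggle

section Padded

variable {a b c : ℕ} {T : Fin a → Fin b → Fin (c + 1)} {r j : ℕ}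

/-- The entries of `T` with its `0`-based cell `(i, j)` placed at `(i + b + 1, j + 1)`, bordered by
`c` above and to the left and by `0` below and to the right. The shift by `b` puts every diagonal
`r = t + 1 + j` meeting the box at a natural `t`, the last one at `t = a + b - 1`. -/
def padded (T : Fin a → Fin b → Fin (c + 1)) (r j : ℕ) : ℤ :=
  if j = 0 then c else if b < j then 0 else if r ≤ b then c else entry a b c T (r - b) j

lemma padded_col_zero (T : Fin a → Fin b → Fin (c + 1)) (r : ℕ) : padded T r 0 = c := by
  simp [padded]

lemma padded_of_lt_col (hj : b < j) : padded T r j = 0 := by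
  simp [padded, hj, show j ≠ 0 by omega]

lemma padded_of_le_row (hr : r ≤ b) (hj : j ≤ b) : padded T r j = c := by
  unfold padded; split_ifs <;> first | rfl | omega

lemma padded_of_lt_row (hr : a + b < r) (hj : 1 ≤ j) : padded T r j = 0 := by
  unfold padded entry; split_ifs <;> first | rfl | omega

lemma padded_of_mem_box (hr : b < r) (hr' : r ≤ a + b) (hj : 1 ≤ j) (hj' : j ≤ b) :
    padded T r j = T ⟨r - b - 1, by omega⟩ ⟨j - 1, by omega⟩ := by
  rw [padded, if_neg (by omega), if_neg (by omega), if_neg (by omega), entry, dif_pos (by omega)]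

lemma padded_cell (T : Fin a → Fin b → Fin (c + 1)) (i : Fin a) (j : Fin b) :
    padded T (i + b + 1) (j + 1) = T i j := by
  rw [padded_of_mem_box (by omega) (by omega) (by omega) (by omega)]
  simp [show (i : ℕ) + b + 1 - b - 1 = i by omega]

lemma padded_nonneg (T : Fin a → Fin b → Fin (c + 1)) (r j : ℕ) : 0 ≤ padded T r j := by
  unfold padded; split_ifs <;> positivity

lemma padded_le (T : Fin a → Fin b → Fin (c + 1)) (r j : ℕ) : padded T r j ≤ c := by
  unfold padded entry; split_ifs <;> simp [Nat.le_of_lt_succ (Fin.is_lt _)]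

lemma padded_congr_of_not_mem_box (T T' : Fin a → Fin b → Fin (c + 1))
    (h : ¬(b < r ∧ r ≤ a + b ∧ 1 ≤ j ∧ j ≤ b)) : padded T r j = padded T' r j := by
  unfold padded entry; split_ifs <;> first | rfl | omega

lemma padded_injective : Function.Injective (padded (a := a) (b := b) (c := c)) := by
  intro T T' h
  funext i j
  have := (padded_cell T i j).symm.trans ((congrFun₂ h _ _).trans (padded_cell T' i j))
  exact Fin.ext (by exact_mod_cast this)

lemma padded_succ_row_le (hT : T ∈ PlanePartitions a b c) (r j : ℕ) :
    padded T (r + 1) j ≤ padded T r j := by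
  rcases Nat.eq_zero_or_pos j with rfl | hj
  · simp [padded_col_zero]
  by_cases hjb : b < j
  · simp [padded_of_lt_col hjb]
  by_cases hrb : r < b
  · rw [padded_of_le_row (by omega) (by omega), padded_of_le_row (by omega) (by omega)]
  by_cases hrb' : r = b
  · rw [hrb', padded_of_le_row le_rfl (by omega)]
    exact padded_le T _ _
  by_cases hra : a + b < r + 1
  · rw [padded_of_lt_row hra hj]
    exact padded_nonneg T _ _
  rw [padded_of_mem_box (by omega) (by omega) hj (by omega),
    padded_of_mem_box (by omega) (by omega) hj (by omega)]
  simp only [PlanePartitions, mem_filter, mem_univ, true_and] at hT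
  exact_mod_cast hT.2 _ _ _ (Fin.mk_le_mk.2 (by omega))

lemma padded_succ_col_le (hT : T ∈ PlanePartitions a b c) (r j : ℕ) :
    padded T r (j + 1) ≤ padded T r j := by
  rcases Nat.eq_zero_or_pos j with rfl | hj
  · rw [padded_col_zero]
    exact padded_le T _ _
  by_cases hjb : b < j + 1
  · rw [padded_of_lt_col hjb]
    exact padded_nonneg T _ _
  by_cases hrb : r ≤ b
  · rw [padded_of_le_row hrb (by omega), padded_of_le_row hrb (by omega)]
  by_cases hra : a + b < r
  · rw [padded_of_lt_row hra hj, padded_of_lt_row hra (by omega)]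
  rw [padded_of_mem_box (by omega) (by omega) hj (by omega),
    padded_of_mem_box (by omega) (by omega) (by omega) (by omega)]
  simp only [PlanePartitions, mem_filter, mem_univ, true_and] at hT
  exact_mod_cast hT.1 _ _ _ (Fin.mk_le_mk.2 (by omega))

lemma mem_iff_rowColAntitone_padded :
    T ∈ PlanePartitions a b c ↔ RowColAntitone (padded T) := by
  refine ⟨fun hT r j ↦ ⟨padded_succ_row_le hT r j, padded_succ_col_le hT r j⟩, fun hT ↦ ?_⟩
  simp only [PlanePartitions, mem_filter, mem_univ, true_and]
  constructor
  · intro i j j' hjj'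
    have := antitone_nat_of_succ_le (fun n ↦ (hT (i + b + 1) n).2)
      (Nat.succ_le_succ (Fin.le_def.1 hjj'))
    rw [padded_cell, padded_cell] at this
    exact_mod_cast this
  · intro i i' j hii'
    have := antitone_nat_of_succ_le (f := fun n ↦ padded T n (j + 1)) (fun n ↦ (hT n (j + 1)).1)
      (Nat.add_le_add_right (Nat.add_le_add_right (Fin.le_def.1 hii') b) 1)
    simp only [padded_cell] at this
    exact_mod_cast this

end Padded

section Toggle

variable {a b c t : ℕ} {T : Fin a → Fin b → Fin (c + 1)} {r j : ℕ}

/-- The clamp to `[0, c]` is inactive on plane partitions, see `padded_toggle`. -/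
def toggle (t : ℕ) (T : Fin a → Fin b → Fin (c + 1)) : Fin a → Fin b → Fin (c + 1) :=
  fun i j ↦ ⟨min c (diagToggle t (padded T) (i + b + 1) (j + 1)).toNat, by omega⟩

lemma diagToggle_padded_of_not_mem_box (ht : t + 2 ≤ a + b)
    (h : ¬(b < r ∧ r ≤ a + b ∧ 1 ≤ j ∧ j ≤ b)) : diagToggle t (padded T) r j = padded T r j := by
  by_cases hd : r = t + 1 + j ∧ 1 ≤ j
  swap
  · exact diagToggle_of_not_diag hd
  rw [diagToggle_of_diag hd.1 hd.2]
  have hup := padded_nonneg T (r - 1) j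
  have hleft := padded_nonneg T r (j - 1)
  have hdown := padded_le T (r + 1) j
  by_cases hjb : b < j
  · have h₁ : padded T (r - 1) j = 0 := padded_of_lt_col hjb
    have h₂ : padded T (r + 1) j = 0 := padded_of_lt_col hjb
    have h₃ : padded T r (j + 1) = 0 := padded_of_lt_col (by omega)
    have h₄ : padded T r j = 0 := padded_of_lt_col hjb
    omega
  by_cases hrb : r ≤ b
  · have h₁ : padded T (r - 1) j = c := padded_of_le_row (by omega) (by omega)
    have h₂ : padded T r (j - 1) = c := by
      rcases Nat.eq_zero_or_pos (j - 1) with h0 | h0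
      · rw [h0, padded_col_zero]
      · exact padded_of_le_row hrb (by omega)
    have h₃ : padded T r (j + 1) = c := padded_of_le_row hrb (by omega)
    have h₄ : padded T r j = c := padded_of_le_row hrb (by omega)
    omega
  -- below the box; `t + 2 ≤ a + b` keeps the left neighbour off column `0`
  have hra : a + b < r := by omega
  have h₁ : padded T r (j - 1) = 0 := padded_of_lt_row hra (by omega)
  have h₂ : padded T (r + 1) j = 0 := padded_of_lt_row (by omega) hd.2
  have h₃ : padded T r (j + 1) = 0 := by
    rcases lt_or_ge b (j + 1) with hjb' | hjb'
    · exact padded_of_lt_col hjb'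
    · exact padded_of_lt_row hra (by omega)
  have h₄ : padded T r j = 0 := padded_of_lt_row hra hd.2
  omega

lemma padded_toggle (hT : T ∈ PlanePartitions a b c) (ht : t + 2 ≤ a + b) :
    padded (toggle t T) = diagToggle t (padded T) := by
  funext r j
  by_cases hbox : b < r ∧ r ≤ a + b ∧ 1 ≤ j ∧ j ≤ b
  · obtain ⟨i, j', rfl, rfl⟩ : ∃ (i : Fin a) (j' : Fin b), r = i + b + 1 ∧ j = j' + 1 :=
      ⟨⟨r - b - 1, by omega⟩, ⟨j - 1, by omega⟩, by simp only; omega, by simp only; omega⟩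
    have hg := mem_iff_rowColAntitone_padded.1 hT
    have hbounds := diagToggle_mem_Icc hg t (i + b + 1) (j' + 1)
    have := padded_nonneg T (i + b + 1 + 1) (j' + 1)
    have := padded_le T (i + b + 1 - 1) (j' + 1)
    rw [padded_cell, toggle]
    simp only
    omega
  · rw [padded_congr_of_not_mem_box (toggle t T) T hbox, diagToggle_padded_of_not_mem_box ht hbox]

lemma toggle_mem (hT : T ∈ PlanePartitions a b c) (ht : t + 2 ≤ a + b) :
    toggle t T ∈ PlanePartitions a b c := by
  rw [mem_iff_rowColAntitone_padded, padded_toggle hT ht]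
  exact rowColAntitone_diagToggle (mem_iff_rowColAntitone_padded.1 hT) t

lemma toggle_toggle (hT : T ∈ PlanePartitions a b c) (ht : t + 2 ≤ a + b) :
    toggle t (toggle t T) = T :=
  padded_injective (by
    rw [padded_toggle (toggle_mem hT ht) ht, padded_toggle hT ht, diagToggle_diagToggle])

lemma faces_padded_toggle (hT : T ∈ PlanePartitions a b c) (ht : t + 2 ≤ a + b) :
    faces b (t + 1) (padded (toggle t T)) = faces b t (padded T) := by
  rw [padded_toggle hT ht]
  refine faces_diagToggle ?_ ?_
  · rw [padded_col_zero]; exact padded_le T _ _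
  · rw [padded_of_lt_col (Nat.lt_succ_self b)]; exact padded_nonneg T _ _

lemma sum_faces_succ (ht : t + 2 ≤ a + b) :
    ∑ T ∈ PlanePartitions a b c, faces b (t + 1) (padded T)
      = ∑ T ∈ PlanePartitions a b c, faces b t (padded T) :=
  sum_bij' (fun T _ ↦ toggle t T) (fun T _ ↦ toggle t T)
    (fun _ hT ↦ toggle_mem hT ht) (fun _ hT ↦ toggle_mem hT ht)
    (fun _ hT ↦ toggle_toggle hT ht) (fun _ hT ↦ toggle_toggle hT ht)
    (fun _ hT ↦ by rw [← faces_padded_toggle (toggle_mem hT ht) ht, toggle_toggle hT ht])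

lemma sum_faces_eq_sum_faces_zero (ht : t < a + b) :
    ∑ T ∈ PlanePartitions a b c, faces b t (padded T)
      = ∑ T ∈ PlanePartitions a b c, faces b 0 (padded T) := by
  induction t with
  | zero => rfl
  | succ n ih => rw [sum_faces_succ (by omega), ih (by omega)]

end Toggle

variable {a b c : ℕ}

lemma sum_faces_padded (T : Fin a → Fin b → Fin (c + 1)) :
    ∑ t ∈ range (a + b), faces b t (padded T) = b * c := by
  rw [range_eq_Ico, sum_faces_Ico (Nat.zero_le _)]
  have hterm : ∀ j ∈ range b,
      padded T (0 + j + 1) (j + 1) - padded T (a + b + j + 1) (j + 1) = c := fun j hj ↦ by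
    rw [mem_range] at hj
    rw [padded_of_le_row (by omega) (by omega), padded_of_lt_row (by omega) (by omega), sub_zero]
  rw [sum_congr rfl hterm, sum_const, card_range, nsmul_eq_mul]

lemma sum_faces_padded_last (T : Fin a → Fin b → Fin (c + 1)) {x : ℕ} (hxa : x ≤ a) (hxb : x ≤ b) :
    ∑ t ∈ Ico (a + b - x) (a + b), faces b t (padded T)
      = ∑ i ∈ Icc (a + 1 - x) a, (entry a b c T i (x + i - a) : ℤ) := by
  rw [sum_faces_Ico (Nat.sub_le _ _)]
  have hvanish : ∀ j ∈ range b, padded T (a + b + j + 1) (j + 1) = 0 := fun j _ ↦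
    padded_of_lt_row (by omega) (by omega)
  have hbeyond : ∀ j ∈ range b, j ∉ range x → padded T (a + b - x + j + 1) (j + 1) = 0 :=
    fun j _ hj ↦ padded_of_lt_row (by rw [mem_range] at hj; omega) (by omega)
  simp only [sum_sub_distrib, sum_congr rfl hvanish, sum_const_zero, sub_zero]
  rw [← sum_subset (range_subset_range.2 hxb) hbeyond, ← Ico_add_one_right_eq_Icc,
    sum_Ico_eq_sum_range, show a + 1 - (a + 1 - x) = x by omega]
  refine sum_congr rfl fun j hj ↦ ?_
  rw [mem_range] at hj
  rw [padded_of_mem_box (by omega) (by omega) (by omega) (by omega), entry, dif_pos (by omega)]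
  simp only [show a + b - x + j + 1 - b - 1 = a + 1 - x + j - 1 by omega,
    show j + 1 - 1 = x + (a + 1 - x + j) - a - 1 by omega]

lemma card_pos : 0 < (PlanePartitions a b c).card :=
  Finset.card_pos.2 ⟨fun _ _ ↦ 0, by simp [PlanePartitions]⟩

lemma add_mul_sum_faces_zero :
    ((a + b : ℕ) : ℤ) * ∑ T ∈ PlanePartitions a b c, faces b 0 (padded T)
      = (PlanePartitions a b c).card * (b * c) := calc
  _ = ∑ t ∈ range (a + b), ∑ T ∈ PlanePartitions a b c, faces b t (padded T) := by
    rw [sum_congr rfl fun t ht ↦ sum_faces_eq_sum_faces_zero (mem_range.1 ht)]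
    simp
  _ = _ := by
    rw [sum_comm]
    simp [sum_faces_padded]

lemma sum_sum_entry_diagonal {x : ℕ} (hxa : x ≤ a) (hxb : x ≤ b) :
    ∑ T ∈ PlanePartitions a b c, ∑ i ∈ Icc (a + 1 - x) a, (entry a b c T i (x + i - a) : ℤ)
      = x * ∑ T ∈ PlanePartitions a b c, faces b 0 (padded T) := calc
  _ = ∑ t ∈ Ico (a + b - x) (a + b), ∑ T ∈ PlanePartitions a b c, faces b t (padded T) :=
    (sum_congr rfl fun T _ ↦ (sum_faces_padded_last T hxa hxb).symm).trans sum_comm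
  _ = _ := by
    rw [sum_congr rfl fun t ht ↦ sum_faces_eq_sum_faces_zero (mem_Ico.1 ht).2]
    simp [show a + b - (a + b - x) = x by omega]

end PlanePartitions

open PlanePartitions in
theorem diagonal_expected_sum_low_general (a b c : ℕ) (ha : 0 < a)
    (x : ℕ) (hx2 : x ≤ min a b) :
    ∑ i ∈ Finset.Icc (a + 1 - x) a, E a b c i (x + i - a)
      = (b : ℚ) * c * x / ((a : ℚ) + b) := by
  have hdiag := congrArg (Int.cast : ℤ → ℚ) <| sum_sum_entry_diagonal (c := c)
    (hx2.trans (min_le_left a b)) (hx2.trans (min_le_right a b))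
  have htotal := congrArg (Int.cast : ℤ → ℚ) <| add_mul_sum_faces_zero (a := a) (b := b) (c := c)
  push_cast at hdiag htotal
  have hN : ((PlanePartitions a b c).card : ℚ) ≠ 0 := by exact_mod_cast card_pos.ne'
  have hab : (a : ℚ) + b ≠ 0 := by positivity
  simp only [E, ← sum_div]
  rw [sum_comm, div_eq_div_iff hN hab, hdiag]
  linear_combination (x : ℚ) * htotal

theorem diagonal_expected_sum_low (a b c : ℕ) (ha : 0 < a) (hb : 0 < b) (hc : 0 < c)
    (x : ℕ) (hx1 : 1 ≤ x) (hx2 : x ≤ min a b) :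
    ∑ i ∈ Finset.Icc (a + 1 - x) a, E a b c i (x + i - a)
      = (b : ℚ) * c * x / ((a : ℚ) + b) :=
  diagonal_expected_sum_low_general a b c ha x hx2
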